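/- Let j ≥ 0 and let x = (m_j/n_j)·(e_1 + e_2 + ⋯ + e_{n_j}) ∈ c₀₀. Then for every f ∈ W_aux of weight m_i the following estimates hold: |f(x)| ≤ 2/m_i if i < j, and |f(x)| ≤ m_j/m_i if i ≥ j. -/

import Mathlib

/-- The sequence `m_0 = 2`, `m_{j+1} = m_j ^ 5`. -/
def mseq : ℕ → ℕ
  | 0 => 2
  | j + 1 => (mseq j) ^ 5

lemma two_le_mseq (j : ℕ) : 2 ≤ mseq j := by
  induction j with
  | zero => rfl
  | succ n ih =>
    calc 2 ≤ mseq n := ih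
    _ ≤ (mseq n) ^ 5 := Nat.le_self_pow (by norm_num) _

lemma sseq_exists (j : ℕ) : ∃ s : ℕ, 1 ≤ s ∧ (mseq (j + 1)) ^ 3 ≤ 2 ^ s := by
  refine ⟨(mseq (j + 1)) ^ 3, ?_, ?_⟩
  · exact Nat.one_le_pow _ _ (lt_of_lt_of_le (by norm_num) (two_le_mseq (j + 1)))
  · exact Nat.lt_two_pow_self.le

/-- `s_j` is the least positive integer with `2 ^ s_j ≥ m_{j+1} ^ 3`. -/
def sseq (j : ℕ) : ℕ := Nat.find (sseq_exists j)

/-- The sequence `n_0 = 4`, `n_{j+1} = (12 n_j) ^ {s_j}`. -/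
def nseq : ℕ → ℕ
  | 0 => 4
  | j + 1 => (12 * nseq j) ^ (sseq j)

/-- `f < g` for finitely supported functions: the supports are successive. -/
def RSucc (f g : ℕ+ →₀ ℝ) : Prop :=
  ∀ a ∈ f.support, ∀ b ∈ g.support, a < b

/-- The action `f(x) = Σ_n f(n) x(n)`. -/
noncomputable def dotp (f x : ℕ+ →₀ ℝ) : ℝ := ∑ n ∈ f.support, f n * x n

/-- `W_aux`: the smallest subset of `c₀₀` containing `±e_n^*` and closed under the
`(A_{4 n_t}, m_t⁻¹)`-operations (norming set of the auxiliary mixed Tsirelson space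
`T[(A_{4 n_t}, m_t⁻¹)_t]`). -/
inductive Waux : (ℕ+ →₀ ℝ) → Prop
  | pos (n : ℕ+) : Waux (Finsupp.single n 1)
  | neg (n : ℕ+) : Waux (-(Finsupp.single n 1))
  | op (t : ℕ) (l : List (ℕ+ →₀ ℝ)) (hne : l ≠ []) (hchain : l.Chain' RSucc)
      (hmem : ∀ p ∈ l, Waux p) (hlen : l.length ≤ 4 * nseq t) :
      Waux ((mseq t : ℝ)⁻¹ • l.sum)

/-- `f ∈ W_aux` has weight `m_i`: `f = m_i⁻¹ (f₁ + ⋯ + f_k)` for successive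
`f₁ < ⋯ < f_k` in `W_aux` with `k ≤ 4 n_i`. -/
def HasWeightAux (f : ℕ+ →₀ ℝ) (i : ℕ) : Prop :=
  ∃ l : List (ℕ+ →₀ ℝ), l ≠ [] ∧ l.Chain' RSucc ∧ (∀ p ∈ l, Waux p) ∧
    l.length ≤ 4 * nseq i ∧ f = (mseq i : ℝ)⁻¹ • l.sum

/-- The vector `x = (m_j / n_j) (e₁ + e₂ + ⋯ + e_{n_j})`. -/
noncomputable def basisAvg (j : ℕ) : ℕ+ →₀ ℝ :=
  ((mseq j : ℝ) / (nseq j : ℝ)) •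
    ∑ s ∈ Finset.range (nseq j), Finsupp.single (⟨s + 1, Nat.succ_pos s⟩ : ℕ+) (1 : ℝ)

-- ===== auxiliary lemmas =====

lemma one_le_sseq (j : ℕ) : 1 ≤ sseq j := (Nat.find_spec (sseq_exists j)).1
lemma sseq_pow (j : ℕ) : mseq (j+1) ^ 3 ≤ 2 ^ sseq j := (Nat.find_spec (sseq_exists j)).2

lemma mseq_mono : Monotone mseq :=
  monotone_nat_of_le_succ (fun n => Nat.le_self_pow (by norm_num) _)

lemma four_le_nseq (j : ℕ) : 4 ≤ nseq j := by
  induction j with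
  | zero => rfl
  | succ n ih =>
    show 4 ≤ (12 * nseq n) ^ sseq n
    calc 4 ≤ 12 * nseq n := by omega
    _ ≤ (12 * nseq n) ^ sseq n := Nat.le_self_pow (by have := one_le_sseq n; omega) _

lemma nseq_mono : Monotone nseq := by
  apply monotone_nat_of_le_succ
  intro n
  show nseq n ≤ (12 * nseq n) ^ sseq n
  calc nseq n ≤ 12 * nseq n := by omega
  _ ≤ (12 * nseq n) ^ sseq n := Nat.le_self_pow (by have := one_le_sseq n; omega) _

lemma rsucc_trans' {a b c : ℕ+ →₀ ℝ} (h1 : RSucc a b) (h2 : RSucc b c)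
    (hb : b.support.Nonempty) : RSucc a c := by
  obtain ⟨m, hm⟩ := hb
  intro x hx y hy
  exact lt_trans (h1 x hx m hm) (h2 m hm y hy)

lemma chain_all {p : ℕ+ →₀ ℝ} {l : List (ℕ+ →₀ ℝ)} (h : List.Chain RSucc p l)
    (hne : ∀ q ∈ l, q.support.Nonempty) : ∀ q ∈ l, RSucc p q := by
  induction l generalizing p with
  | nil => simp
  | cons r rest ih =>
    rcases List.chain_cons.1 h with ⟨hpr, hrest⟩
    intro q hq
    rcases List.mem_cons.1 hq with h' | h'
    · subst h'; exact hpr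
    · exact rsucc_trans' hpr
        (ih hrest (fun q hq => hne q (List.mem_cons_of_mem _ hq)) q h')
        (hne r List.mem_cons_self)

lemma chain'_cons_chain {p : ℕ+ →₀ ℝ} {l : List (ℕ+ →₀ ℝ)}
    (h : (p :: l).Chain' RSucc) : List.Chain RSucc p l := h

lemma chain'_pairwise : ∀ {l : List (ℕ+ →₀ ℝ)}, l.Chain' RSucc →
    (∀ p ∈ l, p.support.Nonempty) → l.Pairwise RSucc := by
  intro l
  induction l with
  | nil => simp
  | cons p rest ih =>
    intro hc hne
    refine List.Pairwise.cons ?_ (ih hc.tail (fun q hq => hne q (List.mem_cons_of_mem _ hq)))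
    exact chain_all (chain'_cons_chain hc) (fun q hq => hne q (List.mem_cons_of_mem _ hq))

lemma list_sum_apply (l : List (ℕ+ →₀ ℝ)) (n : ℕ+) :
    l.sum n = (l.map (fun p => p n)).sum := by
  induction l with
  | nil => simp
  | cons p t ih => simp [List.sum_cons, Finsupp.add_apply, ih]

lemma sum_F_list_sum (l : List (ℕ+ →₀ ℝ)) (F : Finset ℕ+) :
    ∑ n ∈ F, l.sum n = (l.map (fun p => ∑ n ∈ F, p n)).sum := by
  induction l with
  | nil => simp
  | cons p t ih => simp [List.sum_cons, Finsupp.add_apply, Finset.sum_add_distrib, ih]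

lemma tail_sum_eq_zero {p : ℕ+ →₀ ℝ} {t : List (ℕ+ →₀ ℝ)} (hch : List.Chain RSucc p t)
    (hne : ∀ q ∈ t, q.support.Nonempty) {n : ℕ+} (hn : n ∈ p.support) : t.sum n = 0 := by
  rw [list_sum_apply]
  apply List.sum_eq_zero
  intro x hx
  rcases List.mem_map.1 hx with ⟨q, hq, rfl⟩
  by_contra h0
  have h2 : n ∈ q.support := Finsupp.mem_support_iff.2 h0
  exact lt_irrefl n (chain_all hch hne q hq n hn n h2)

lemma listsum_abs_le (l : List (ℕ+ →₀ ℝ)) (hchain : l.Chain' RSucc)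
    (hne : ∀ p ∈ l, p.support.Nonempty) (hb : ∀ p ∈ l, ∀ n, |p n| ≤ 1) (n : ℕ+) :
    |l.sum n| ≤ 1 := by
  induction l with
  | nil => simp
  | cons p t ih =>
    rw [List.sum_cons, Finsupp.add_apply]
    by_cases hp : p n = 0
    · rw [hp, zero_add]
      exact ih hchain.tail (fun q hq => hne q (List.mem_cons_of_mem _ hq))
        (fun q hq => hb q (List.mem_cons_of_mem _ hq))
    · have h0 : t.sum n = 0 :=
        tail_sum_eq_zero (chain'_cons_chain hchain)
          (fun q hq => hne q (List.mem_cons_of_mem _ hq)) (Finsupp.mem_support_iff.2 hp)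
      rw [h0, add_zero]
      exact hb p List.mem_cons_self n

lemma listsum_supp (l : List (ℕ+ →₀ ℝ)) (hl : l ≠ []) (hchain : l.Chain' RSucc)
    (hne : ∀ p ∈ l, p.support.Nonempty) : (l.sum).support.Nonempty := by
  cases l with
  | nil => exact absurd rfl hl
  | cons p t =>
    obtain ⟨m, hm⟩ := hne p List.mem_cons_self
    refine ⟨m, Finsupp.mem_support_iff.2 ?_⟩
    rw [List.sum_cons, Finsupp.add_apply,
      tail_sum_eq_zero (chain'_cons_chain hchain)
        (fun q hq => hne q (List.mem_cons_of_mem _ hq)) hm, add_zero]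
    exact Finsupp.mem_support_iff.1 hm

lemma waux_basic {g : ℕ+ →₀ ℝ} (h : Waux g) : g.support.Nonempty ∧ ∀ n, |g n| ≤ 1 := by
  induction h with
  | pos n =>
    constructor
    · rw [Finsupp.support_single_ne_zero _ (one_ne_zero)]
      exact ⟨n, Finset.mem_singleton_self n⟩
    · intro m
      rw [Finsupp.single_apply]
      split <;> simp
  | neg n =>
    constructor
    · rw [Finsupp.support_neg, Finsupp.support_single_ne_zero _ (one_ne_zero)]
      exact ⟨n, Finset.mem_singleton_self n⟩
    · intro m
      rw [Finsupp.neg_apply, abs_neg, Finsupp.single_apply]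
      split <;> simp
  | op t l hne hchain hmem hlen ih =>
    have hne' : ∀ p ∈ l, p.support.Nonempty := fun p hp => (ih p hp).1
    have hb : ∀ p ∈ l, ∀ n, |p n| ≤ 1 := fun p hp => (ih p hp).2
    have hm2 : (2:ℝ) ≤ (mseq t : ℝ) := by exact_mod_cast two_le_mseq t
    have hm : (0:ℝ) < (mseq t : ℝ) := by linarith
    constructor
    · rw [Finsupp.support_smul_eq (inv_ne_zero (ne_of_gt hm))]
      exact listsum_supp l hne hchain hne'
    · intro n
      rw [Finsupp.smul_apply, smul_eq_mul, abs_mul, abs_inv, abs_of_nonneg hm.le]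
      calc (mseq t : ℝ)⁻¹ * |l.sum n| ≤ (mseq t : ℝ)⁻¹ * 1 := by
            apply mul_le_mul_of_nonneg_left (listsum_abs_le l hchain hne' hb n)
            positivity
      _ ≤ 1 := by
            rw [mul_one]
            rw [inv_le_one_iff₀]
            right; linarith

lemma sum_card_le : ∀ (l : List (ℕ+ →₀ ℝ)), l.Pairwise RSucc → ∀ (F : Finset ℕ+),
    (l.map (fun p => (F ∩ p.support).card)).sum ≤ F.card := by
  intro l
  induction l with
  | nil => simp
  | cons p t ih =>
    intro hpw F
    rcases List.pairwise_cons.1 hpw with ⟨hfirst, hrest⟩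
    rw [List.map_cons, List.sum_cons]
    have h2 : (t.map (fun q => (F ∩ q.support).card)).sum
        = (t.map (fun q => ((F \ p.support) ∩ q.support).card)).sum := by
      congr 1
      apply List.map_congr_left
      intro q hq
      congr 1
      ext a
      simp only [Finset.mem_inter, Finset.mem_sdiff]
      constructor
      · rintro ⟨haF, haq⟩
        exact ⟨⟨haF, fun hap => lt_irrefl a (hfirst q hq a hap a haq)⟩, haq⟩
      · rintro ⟨⟨haF, _⟩, haq⟩; exact ⟨haF, haq⟩
    rw [h2]
    have h4 := ih hrest (F \ p.support)
    have h3 := Finset.card_inter_add_card_sdiff F p.support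
    omega

lemma list_abs_sum_le (l : List ℝ) : |l.sum| ≤ (l.map abs).sum := by
  induction l with
  | nil => simp
  | cons a t ih =>
    rw [List.sum_cons, List.map_cons, List.sum_cons]
    exact (abs_add_le _ _).trans (by linarith)

lemma list_sum_const {X : Type*} (l : List X) (c : ℝ) :
    (l.map (fun _ => c)).sum = l.length * c := by
  induction l with
  | nil => simp
  | cons a t ih =>
    simp only [List.map_cons, List.sum_cons, List.length_cons, ih]
    push_cast
    ring

lemma keyQ (k : ℕ) : ∀ ℓ : ℕ, ∀ t, t ≤ k → ∀ l : List (ℕ+ →₀ ℝ),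
    l.Chain' RSucc → (∀ p ∈ l, Waux p) → l.length ≤ 4 * nseq t → ∀ F : Finset ℕ+,
    |∑ n ∈ F, l.sum n| ≤ (4 * (nseq k : ℝ)) ^ (ℓ + 1) + (F.card : ℝ) / (mseq (k+1) : ℝ)
      + (F.card : ℝ) / 2 ^ ℓ := by
  intro ℓ
  induction ℓ with
  | zero =>
    intro t ht l hchain hmem hlen F
    have hne' : ∀ p ∈ l, p.support.Nonempty := fun p hp => (waux_basic (hmem p hp)).1
    have hb : ∀ p ∈ l, ∀ n, |p n| ≤ 1 := fun p hp => (waux_basic (hmem p hp)).2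
    have h1 : |∑ n ∈ F, l.sum n| ≤ (F.card : ℝ) := by
      calc |∑ n ∈ F, l.sum n| ≤ ∑ n ∈ F, |l.sum n| := Finset.abs_sum_le_sum_abs _ _
      _ ≤ ∑ n ∈ F, 1 := Finset.sum_le_sum (fun n _ => listsum_abs_le l hchain hne' hb n)
      _ = (F.card : ℝ) := by simp
    have h2 : (0:ℝ) ≤ 4 * (nseq k:ℝ) := by positivity
    have h3 : (0:ℝ) ≤ (F.card:ℝ) / (mseq (k+1):ℝ) := by positivity
    simp only [zero_add, pow_one, pow_zero, div_one]
    linarith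
  | succ ℓ ih =>
    intro t ht l hchain hmem hlen F
    have hne' : ∀ p ∈ l, p.support.Nonempty := fun p hp => (waux_basic (hmem p hp)).1
    have hnk4 : (4:ℝ) ≤ (nseq k : ℝ) := by exact_mod_cast four_le_nseq k
    have hN16 : (16:ℝ) ≤ 4 * (nseq k:ℝ) := by linarith
    have hmk2 : (2:ℝ) ≤ (mseq (k+1) : ℝ) := by exact_mod_cast two_le_mseq (k+1)
    have hmkpos : (0:ℝ) < (mseq (k+1) : ℝ) := by linarith
    set X : ℝ := (4 * (nseq k:ℝ)) ^ (ℓ + 1) with hX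
    have hXpos : (0:ℝ) ≤ X := by rw [hX]; positivity
    set C : ℝ := X / 2 with hC
    set A : ℝ := 1 / (mseq (k+1):ℝ) + 1 / 2 ^ (ℓ+1) with hA
    clear_value X C A
    have hCpos : (0:ℝ) ≤ C := by rw [hC]; linarith
    have hC1 : (1:ℝ) ≤ C := by
      rw [hC, hX, le_div_iff₀ (by norm_num : (0:ℝ) < 2)]
      calc (1:ℝ) * 2 = 2 := by norm_num
      _ ≤ 4 * (nseq k:ℝ) := by linarith
      _ ≤ (4*(nseq k:ℝ))^(ℓ+1) := le_self_pow₀ (by linarith) (by omega)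
    have hApos : (0:ℝ) ≤ A := by rw [hA]; positivity
    have key : ∀ p ∈ l, |∑ n ∈ F, p n| ≤ C + ((F ∩ p.support).card : ℝ) * A := by
      intro p hp
      cases hmem p hp with
      | pos n0 =>
        have hcard : (0:ℝ) ≤ ((F ∩ (Finsupp.single n0 (1:ℝ)).support).card : ℝ) := by positivity
        have he : ∑ n ∈ F, (Finsupp.single n0 (1:ℝ)) n = if n0 ∈ F then 1 else 0 := by
          rw [← Finset.sum_ite_eq F n0 (fun _ => (1:ℝ))]
          exact Finset.sum_congr rfl (fun n _ => Finsupp.single_apply)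
        rw [he]
        have habs1 : |if n0 ∈ F then (1:ℝ) else 0| ≤ 1 := by split <;> simp
        nlinarith [mul_nonneg hcard hApos]
      | neg n0 =>
        have hcard : (0:ℝ) ≤ ((F ∩ (-(Finsupp.single n0 (1:ℝ))).support).card : ℝ) := by positivity
        have he : ∑ n ∈ F, (-(Finsupp.single n0 (1:ℝ))) n = -(if n0 ∈ F then 1 else 0) := by
          rw [← Finset.sum_ite_eq F n0 (fun _ => (1:ℝ)), ← Finset.sum_neg_distrib]
          exact Finset.sum_congr rfl (fun n _ => by
            rw [Finsupp.neg_apply, Finsupp.single_apply])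
        rw [he, abs_neg]
        have habs1 : |if n0 ∈ F then (1:ℝ) else 0| ≤ 1 := by split <;> simp
        nlinarith [mul_nonneg hcard hApos]
      | op t' l' hne2 hchain2 hmem2 hlen2 =>
        have hmt'2 : (2:ℝ) ≤ (mseq t' : ℝ) := by exact_mod_cast two_le_mseq t'
        have hmt'pos : (0:ℝ) < (mseq t':ℝ) := by linarith
        set F' : Finset ℕ+ := F ∩ (l'.sum).support with hF'
        have hsupp : ((mseq t':ℝ)⁻¹ • l'.sum).support = (l'.sum).support :=
          Finsupp.support_smul_eq (inv_ne_zero (ne_of_gt hmt'pos))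
        have hFsub : ∑ n ∈ F', l'.sum n = ∑ n ∈ F, l'.sum n := by
          apply Finset.sum_subset Finset.inter_subset_left
          intro x hxF hxF'
          exact Finsupp.notMem_support_iff.1
            (fun hc => hxF' (Finset.mem_inter.2 ⟨hxF, hc⟩))
        have hsum_eq : ∑ n ∈ F, ((mseq t':ℝ)⁻¹ • l'.sum) n
            = (mseq t':ℝ)⁻¹ * ∑ n ∈ F', l'.sum n := by
          rw [hFsub, Finset.mul_sum]
          exact Finset.sum_congr rfl (fun n _ => by rw [Finsupp.smul_apply, smul_eq_mul])
        have hcardF' : ((F ∩ ((mseq t':ℝ)⁻¹ • l'.sum).support).card : ℝ) = (F'.card : ℝ) := by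
          rw [hsupp]
        rw [hsum_eq, hcardF', abs_mul, abs_inv, abs_of_nonneg hmt'pos.le]
        have hc'0 : (0:ℝ) ≤ (F'.card : ℝ) := by positivity
        have hexp : (F'.card:ℝ) * A
            = (F'.card:ℝ)/(mseq (k+1):ℝ) + (F'.card:ℝ)/2^ℓ/2 := by
          rw [hA, pow_succ]
          ring
        rcases le_or_gt t' k with hk | hk
        · -- small weight child: use induction hypothesis
          have hIH := ih t' hk l' hchain2 hmem2 hlen2 F'
          have hinv : (mseq t':ℝ)⁻¹ ≤ 1/2 := by
            rw [inv_le_comm₀ hmt'pos (by norm_num)]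
            linarith
          have h1 : (mseq t':ℝ)⁻¹ * |∑ n ∈ F', l'.sum n|
              ≤ (1/2) * (X + (F'.card:ℝ)/(mseq (k+1):ℝ)
                  + (F'.card:ℝ)/2^ℓ) :=
            mul_le_mul hinv hIH (abs_nonneg _) (by norm_num)
          have h2 : (0:ℝ) ≤ (F'.card:ℝ)/(mseq (k+1):ℝ) := by positivity
          rw [hC]
          linarith
        · -- large weight child: pointwise bound
          have hmono : (mseq (k+1):ℝ) ≤ (mseq t':ℝ) := by
            exact_mod_cast mseq_mono hk
          have hne3 : ∀ q ∈ l', q.support.Nonempty := fun q hq => (waux_basic (hmem2 q hq)).1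
          have hb3 : ∀ q ∈ l', ∀ n, |q n| ≤ 1 := fun q hq => (waux_basic (hmem2 q hq)).2
          have hpt : |∑ n ∈ F', l'.sum n| ≤ (F'.card:ℝ) := by
            calc |∑ n ∈ F', l'.sum n| ≤ ∑ n ∈ F', |l'.sum n| := Finset.abs_sum_le_sum_abs _ _
            _ ≤ ∑ n ∈ F', 1 := Finset.sum_le_sum (fun n _ => listsum_abs_le l' hchain2 hne3 hb3 n)
            _ = (F'.card : ℝ) := by simp
          have h1 : (mseq t':ℝ)⁻¹ * |∑ n ∈ F', l'.sum n|
              ≤ (mseq (k+1):ℝ)⁻¹ * (F'.card:ℝ) := by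
            apply mul_le_mul _ hpt (abs_nonneg _) (by positivity)
            exact inv_anti₀ hmkpos hmono
          have h2 : (mseq (k+1):ℝ)⁻¹ * (F'.card:ℝ) = (F'.card:ℝ)/(mseq (k+1):ℝ) := by
            ring
          have h3 : (0:ℝ) ≤ (F'.card:ℝ)/2^ℓ/2 := by positivity
          linarith
    -- sum up over the list
    have habs : |∑ n ∈ F, l.sum n| ≤ (l.map (fun p => |∑ n ∈ F, p n|)).sum := by
      rw [sum_F_list_sum]
      calc |(l.map (fun p => ∑ n ∈ F, p n)).sum|
          ≤ ((l.map (fun p => ∑ n ∈ F, p n)).map abs).sum := list_abs_sum_le _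
      _ = (l.map (fun p => |∑ n ∈ F, p n|)).sum := by rw [List.map_map]; rfl
    have hstep2 : (l.map (fun p => |∑ n ∈ F, p n|)).sum
        ≤ (l.map (fun p => C + ((F ∩ p.support).card:ℝ) * A)).sum :=
      List.sum_le_sum key
    have hsplit : (l.map (fun p => C + ((F ∩ p.support).card:ℝ) * A)).sum
        = (l.length : ℝ) * C + (l.map (fun p => ((F ∩ p.support).card : ℝ))).sum * A := by
      rw [List.sum_map_add, list_sum_const, List.sum_map_mul_right]
    have hcards : (l.map (fun p => ((F ∩ p.support).card : ℝ))).sum ≤ (F.card : ℝ) := by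
      have hnat := sum_card_le l (chain'_pairwise hchain hne') F
      calc (l.map (fun p => ((F ∩ p.support).card : ℝ))).sum
          = (((l.map (fun p => (F ∩ p.support).card)).sum : ℕ) : ℝ) := by
            rw [Nat.cast_list_sum, List.map_map]; rfl
      _ ≤ (F.card : ℝ) := by exact_mod_cast hnat
    have hlenC : (l.length : ℝ) * C ≤ (4*(nseq k:ℝ)) * C := by
      apply mul_le_mul_of_nonneg_right _ hCpos
      calc (l.length:ℝ) ≤ 4*(nseq t : ℝ) := by exact_mod_cast hlen
      _ ≤ 4*(nseq k:ℝ) := by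
          have := nseq_mono ht
          have : (nseq t : ℝ) ≤ (nseq k : ℝ) := by exact_mod_cast this
          linarith
    have hpow : (4 * (nseq k:ℝ)) ^ (ℓ + 1 + 1) = X * (4 * (nseq k:ℝ)) := by
      rw [hX, ← pow_succ]
    have h4nkC : 4 * (nseq k:ℝ) * C ≤ X * (4 * (nseq k:ℝ)) := by
      rw [hC]
      have hXn : (0:ℝ) ≤ X * (nseq k:ℝ) := mul_nonneg hXpos (by linarith)
      linarith
    have hFA : (F.card:ℝ) * A = (F.card:ℝ)/(mseq (k+1):ℝ) + (F.card:ℝ)/2^(ℓ+1) := by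
      rw [hA]
      ring
    have hcardsA : (l.map (fun p => ((F ∩ p.support).card : ℝ))).sum * A ≤ (F.card:ℝ) * A :=
      mul_le_mul_of_nonneg_right hcards hApos
    rw [hpow]
    calc |∑ n ∈ F, l.sum n| ≤ (l.map (fun p => |∑ n ∈ F, p n|)).sum := habs
    _ ≤ (l.map (fun p => C + ((F ∩ p.support).card:ℝ) * A)).sum := hstep2
    _ = (l.length:ℝ) * C + (l.map (fun p => ((F ∩ p.support).card:ℝ))).sum * A := hsplit
    _ ≤ X * (4 * (nseq k:ℝ)) + ((F.card:ℝ)/(mseq (k+1):ℝ) + (F.card:ℝ)/2^(ℓ+1)) := by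
        linarith
    _ = X * (4 * (nseq k:ℝ)) + (F.card:ℝ)/(mseq (k+1):ℝ) + (F.card:ℝ)/2^(ℓ+1) := by ring

def FjSet (j : ℕ) : Finset ℕ+ :=
  (Finset.range (nseq j)).image (fun s => (⟨s + 1, Nat.succ_pos s⟩ : ℕ+))

lemma pnat_mk_inj : Function.Injective (fun s : ℕ => (⟨s + 1, Nat.succ_pos s⟩ : ℕ+)) := by
  intro a b h
  have := congrArg PNat.val h
  simpa using this

lemma FjSet_card (j : ℕ) : (FjSet j).card = nseq j := by
  rw [FjSet]; exact (Finset.card_image_of_injective _ pnat_mk_inj).trans (Finset.card_range _)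

lemma sum_single_apply (j : ℕ) (n : ℕ+) :
    ∑ s ∈ Finset.range (nseq j), (Finsupp.single (⟨s + 1, Nat.succ_pos s⟩ : ℕ+) (1:ℝ)) n
      = if n ∈ FjSet j then 1 else 0 := by
  by_cases hn : n ∈ FjSet j
  · rw [if_pos hn]
    obtain ⟨s0, hs0, hval⟩ := Finset.mem_image.1 hn
    rw [Finset.sum_eq_single s0]
    · rw [← hval, Finsupp.single_apply, if_pos rfl]
    · intro s hs hne
      change (Finsupp.single (Nat.succPNat s) (1:ℝ)) n = 0
      rw [Finsupp.single_apply, if_neg]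
      intro hc
      rw [← hval] at hc
      exact hne (pnat_mk_inj hc)
    · intro hs0'; exact absurd hs0 hs0'
  · rw [if_neg hn]
    apply Finset.sum_eq_zero
    intro s hs
    change (Finsupp.single (Nat.succPNat s) (1:ℝ)) n = 0
    rw [Finsupp.single_apply, if_neg]
    intro hc
    exact hn (Finset.mem_image.2 ⟨s, hs, hc⟩)

lemma basisAvg_apply (j : ℕ) (n : ℕ+) :
    basisAvg j n = ((mseq j : ℝ)/(nseq j : ℝ)) * (if n ∈ FjSet j then 1 else 0) := by
  classical
  show (((mseq j : ℝ)/(nseq j : ℝ)) • ∑ s ∈ Finset.range (nseq j), Finsupp.single (Nat.succPNat s) (1:ℝ)) n = _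
  rw [Finsupp.smul_apply, smul_eq_mul]
  congr 1
  rw [Finsupp.finset_sum_apply]
  exact sum_single_apply j n

lemma dotp_eq (f : ℕ+ →₀ ℝ) (j : ℕ) :
    dotp f (basisAvg j) = ((mseq j : ℝ)/(nseq j : ℝ)) * ∑ n ∈ FjSet j, f n := by
  classical
  rw [dotp]
  have h1 : ∀ n ∈ f.support, f n * basisAvg j n
      = ((mseq j : ℝ)/(nseq j : ℝ)) * (if n ∈ FjSet j then f n else 0) := by
    intro n _
    rw [basisAvg_apply]
    split <;> ring
  rw [Finset.sum_congr rfl h1, ← Finset.mul_sum]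
  congr 1
  rw [Finset.sum_ite_mem]
  apply Finset.sum_subset Finset.inter_subset_right
  intro x hx hx'
  have : x ∉ f.support := fun hc => hx' (Finset.mem_inter.2 ⟨hc, hx⟩)
  exact Finsupp.notMem_support_iff.1 this

theorem statement9 (j : ℕ) (i : ℕ) (f : ℕ+ →₀ ℝ) (hf : HasWeightAux f i) :
    (i < j → |dotp f (basisAvg j)| ≤ 2 / (mseq i : ℝ)) ∧
    (j ≤ i → |dotp f (basisAvg j)| ≤ (mseq j : ℝ) / (mseq i : ℝ)) := by
  obtain ⟨l, hlne, hchain, hmem, hlen, hfeq⟩ := hf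
  have hmi2 : (2:ℝ) ≤ (mseq i : ℝ) := by exact_mod_cast two_le_mseq i
  have hmipos : (0:ℝ) < (mseq i : ℝ) := by linarith
  have hmj2 : (2:ℝ) ≤ (mseq j : ℝ) := by exact_mod_cast two_le_mseq j
  have hmjpos : (0:ℝ) < (mseq j : ℝ) := by linarith
  have hnj4 : (4:ℝ) ≤ (nseq j : ℝ) := by exact_mod_cast four_le_nseq j
  have hnjpos : (0:ℝ) < (nseq j : ℝ) := by linarith
  have hsum : ∑ n ∈ FjSet j, f n = (mseq i:ℝ)⁻¹ * ∑ n ∈ FjSet j, l.sum n := by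
    rw [hfeq, Finset.mul_sum]
    exact Finset.sum_congr rfl (fun n _ => by rw [Finsupp.smul_apply, smul_eq_mul])
  have habs : |dotp f (basisAvg j)|
      = (mseq j:ℝ)/(nseq j:ℝ) * ((mseq i:ℝ)⁻¹ * |∑ n ∈ FjSet j, l.sum n|) := by
    rw [dotp_eq, hsum, abs_mul, abs_mul, abs_of_nonneg (by positivity : (0:ℝ) ≤ (mseq j:ℝ)/(nseq j:ℝ)),
      abs_of_nonneg (by positivity : (0:ℝ) ≤ (mseq i:ℝ)⁻¹)]
  have hne' : ∀ p ∈ l, p.support.Nonempty := fun p hp => (waux_basic (hmem p hp)).1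
  have hb1 : ∀ p ∈ l, ∀ n, |p n| ≤ 1 := fun p hp => (waux_basic (hmem p hp)).2
  have hS1 : |∑ n ∈ FjSet j, l.sum n| ≤ (nseq j : ℝ) := by
    calc |∑ n ∈ FjSet j, l.sum n| ≤ ∑ n ∈ FjSet j, |l.sum n| := Finset.abs_sum_le_sum_abs _ _
    _ ≤ ∑ n ∈ FjSet j, 1 := Finset.sum_le_sum (fun n _ => listsum_abs_le l hchain hne' hb1 n)
    _ = ((FjSet j).card : ℝ) := by simp
    _ = (nseq j : ℝ) := by rw [FjSet_card]
  constructor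
  · -- i < j
    intro hij
    obtain ⟨k, rfl⟩ : ∃ k, j = k + 1 := ⟨j - 1, by omega⟩
    -- choose ℓ
    set ℓ : ℕ := Nat.log 2 (2 * mseq (k+1)) + 1 with hℓ
    have hmne : 2 * mseq (k+1) ≠ 0 := by have := two_le_mseq (k+1); omega
    have hl1 : 2 * mseq (k+1) ≤ 2 ^ ℓ := (Nat.lt_pow_succ_log_self (by norm_num) _).le
    have h2l : 2 ^ ℓ ≤ 4 * mseq (k+1) := by
      have h := Nat.pow_log_le_self 2 hmne
      calc 2 ^ ℓ = 2 * 2 ^ (Nat.log 2 (2 * mseq (k+1))) := by rw [hℓ, pow_succ]; ring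
      _ ≤ 2 * (2 * mseq (k+1)) := by omega
      _ = 4 * mseq (k+1) := by ring
    have hm32 : 32 ≤ mseq (k+1) := by
      have h1 : 2 ≤ mseq k := two_le_mseq k
      have : 2^5 ≤ (mseq k)^5 := Nat.pow_le_pow_left h1 5
      calc 32 = 2^5 := by norm_num
      _ ≤ (mseq k)^5 := this
      _ = mseq (k+1) := rfl
    have hl2 : ℓ + 1 ≤ sseq k := by
      have h1 : 2 ^ (ℓ + 1) ≤ 2 ^ (sseq k) := by
        calc 2 ^ (ℓ+1) = 2 * 2^ℓ := by rw [pow_succ]; ring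
        _ ≤ 8 * mseq (k+1) := by omega
        _ ≤ mseq (k+1) ^ 3 := by
            calc 8 * mseq (k+1) ≤ 32 * mseq (k+1) := by omega
            _ ≤ mseq (k+1) * mseq (k+1) := Nat.mul_le_mul_right _ hm32
            _ ≤ mseq (k+1) * mseq (k+1) * mseq (k+1) :=
                Nat.le_mul_of_pos_right _ (by omega)
            _ = mseq (k+1) ^ 3 := by ring
        _ ≤ 2 ^ (sseq k) := sseq_pow k
      exact (Nat.pow_le_pow_iff_right (by norm_num)).1 h1
    have hkey := keyQ k ℓ i (by omega) l hchain hmem hlen (FjSet (k+1))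
    rw [FjSet_card] at hkey
    -- natural number inequality
    have hnat : 2 * mseq (k+1) * (4 * nseq k) ^ (ℓ+1) ≤ nseq (k+1) := by
      have e1 : nseq (k+1) = (12 * nseq k) ^ (sseq k) := rfl
      have e2 : (12 * nseq k : ℕ) = 3 * (4 * nseq k) := by ring
      calc 2 * mseq (k+1) * (4 * nseq k) ^ (ℓ+1)
          ≤ 2 ^ ℓ * (4 * nseq k) ^ (ℓ+1) := Nat.mul_le_mul_right _ hl1
      _ ≤ 3 ^ (ℓ+1) * (4 * nseq k) ^ (ℓ+1) := by
          apply Nat.mul_le_mul_right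
          calc 2 ^ ℓ ≤ 2 ^ (ℓ+1) := Nat.pow_le_pow_right (by norm_num) (by omega)
          _ ≤ 3 ^ (ℓ+1) := Nat.pow_le_pow_left (by norm_num) _
      _ = (12 * nseq k) ^ (ℓ+1) := by
          rw [e2]; exact (mul_pow 3 (4 * nseq k) (ℓ+1)).symm
      _ ≤ (12 * nseq k) ^ (sseq k) := Nat.pow_le_pow_right (by have := four_le_nseq k; omega) hl2
      _ = nseq (k+1) := rfl
    -- real arithmetic
    have hnk0 : (0:ℝ) ≤ (nseq k : ℝ) := by positivity
    have hXnat : (((4 * nseq k) ^ (ℓ+1) : ℕ) : ℝ) = (4 * (nseq k:ℝ)) ^ (ℓ+1) := by push_cast; ring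
    have hnjR : (0:ℝ) < (nseq (k+1) : ℝ) := by
      have := four_le_nseq (k+1); exact_mod_cast Nat.lt_of_lt_of_le (by norm_num) this
    have hmjR : (0:ℝ) < (mseq (k+1) : ℝ) := by
      have := two_le_mseq (k+1); exact_mod_cast Nat.lt_of_lt_of_le (by norm_num) this
    have hnatR : 2 * (mseq (k+1):ℝ) * (4 * (nseq k:ℝ)) ^ (ℓ+1) ≤ (nseq (k+1):ℝ) := by
      rw [← hXnat]
      exact_mod_cast hnat
    have h2lR : 2 * (mseq (k+1):ℝ) ≤ (2:ℝ) ^ ℓ := by exact_mod_cast hl1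
    -- the three term bounds
    have t1 : (mseq (k+1):ℝ)/(nseq (k+1):ℝ) * ((4 * (nseq k:ℝ)) ^ (ℓ+1)) ≤ 1/2 := by
      rw [div_mul_eq_mul_div, div_le_iff₀ hnjR]
      linarith
    have t2 : (mseq (k+1):ℝ)/(nseq (k+1):ℝ) * ((nseq (k+1):ℝ)/(mseq (k+1):ℝ)) = 1 := by
      field_simp
    have t3 : (mseq (k+1):ℝ)/(nseq (k+1):ℝ) * ((nseq (k+1):ℝ)/2^ℓ) ≤ 1/2 := by
      rw [div_mul_div_comm, div_le_iff₀ (by positivity)]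
      have h2p : (0:ℝ) < (2:ℝ)^ℓ := by positivity
      nlinarith
    have hfrac : (0:ℝ) ≤ (mseq (k+1):ℝ)/(nseq (k+1):ℝ) := by positivity
    have hS2 : (mseq (k+1):ℝ)/(nseq (k+1):ℝ) * |∑ n ∈ FjSet (k+1), l.sum n| ≤ 2 := by
      calc (mseq (k+1):ℝ)/(nseq (k+1):ℝ) * |∑ n ∈ FjSet (k+1), l.sum n|
          ≤ (mseq (k+1):ℝ)/(nseq (k+1):ℝ) * ((4 * (nseq k:ℝ)) ^ (ℓ+1)
            + (nseq (k+1):ℝ)/(mseq (k+1):ℝ) + (nseq (k+1):ℝ)/2^ℓ) :=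
            mul_le_mul_of_nonneg_left hkey hfrac
      _ = (mseq (k+1):ℝ)/(nseq (k+1):ℝ) * ((4 * (nseq k:ℝ)) ^ (ℓ+1))
            + (mseq (k+1):ℝ)/(nseq (k+1):ℝ) * ((nseq (k+1):ℝ)/(mseq (k+1):ℝ))
            + (mseq (k+1):ℝ)/(nseq (k+1):ℝ) * ((nseq (k+1):ℝ)/2^ℓ) := by ring
      _ ≤ 1/2 + 1 + 1/2 := by linarith
      _ = 2 := by norm_num
    rw [habs]
    have : (mseq (k+1):ℝ)/(nseq (k+1):ℝ) * ((mseq i:ℝ)⁻¹ * |∑ n ∈ FjSet (k+1), l.sum n|)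
        = (mseq i:ℝ)⁻¹ * ((mseq (k+1):ℝ)/(nseq (k+1):ℝ) * |∑ n ∈ FjSet (k+1), l.sum n|) := by
      ring
    rw [this]
    calc (mseq i:ℝ)⁻¹ * ((mseq (k+1):ℝ)/(nseq (k+1):ℝ) * |∑ n ∈ FjSet (k+1), l.sum n|)
        ≤ (mseq i:ℝ)⁻¹ * 2 := mul_le_mul_of_nonneg_left hS2 (by positivity)
    _ = 2 / (mseq i:ℝ) := by ring
  ·
    intro _
    rw [habs]
    calc (mseq j:ℝ)/(nseq j:ℝ) * ((mseq i:ℝ)⁻¹ * |∑ n ∈ FjSet j, l.sum n|)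
        ≤ (mseq j:ℝ)/(nseq j:ℝ) * ((mseq i:ℝ)⁻¹ * (nseq j:ℝ)) := by
          apply mul_le_mul_of_nonneg_left _ (by positivity)
          exact mul_le_mul_of_nonneg_left hS1 (by positivity)
    _ = (mseq j:ℝ) / (mseq i:ℝ) := by field_simp
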